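/- arXiv:1508.00603 — 7 statements merged into one kernel-verified Lean document; each statement's English description precedes it below -/
import Mathlib

section
/- Let p be a prime, d ≥ 1 an integer, and let γ be an element of the finite field F_{p^{d+1}} that is not a root of any nonzero polynomial of degree at most d with coefficients in the prime subfield F_p. Let α_1, ..., α_n be distinct elements of F_p. Then for any two distinct vectors I = (i_1,...,i_n) and J = (j_1,...,j_n) of nonnegative integers with both coordinate sums at most d, and for every nonzero β ∈ F_p, one has ∏_{k=1}^n (γ + α_k)^{i_k} ≠ β · ∏_{k=1}^n (γ + α_k)^{j_k} in F_{p^{d+1}}. -/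
/-! The two products are the values at `γ` of `∏ (X + α_k)^{i_k}` and `β ∏ (X + α_k)^{j_k}`.
Their difference has degree at most `d`, so it vanishes at `γ` only if it is the zero polynomial.
It is not: `-α_k` is a root of multiplicity `i_k` of the first and `j_k` of the second, and
`I ≠ J`. -/

open Polynomial Finset

namespace Polynomial

variable {ι R : Type*} [Fintype ι]

noncomputable def linearFactorProd [CommRing R] (α : ι → R) (I : ι → ℕ) : R[X] :=
  ∏ k, (X + C (α k)) ^ I k

section CommRing

variable [CommRing R] (α : ι → R) (I : ι → ℕ)

theorem monic_linearFactorProd [Nontrivial R] : (linearFactorProd α I).Monic :=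
  monic_prod_of_monic _ _ fun k _ => (monic_X_add_C (α k)).pow (I k)

theorem natDegree_linearFactorProd [Nontrivial R] :
    (linearFactorProd α I).natDegree = ∑ k, I k := by
  rw [linearFactorProd, natDegree_prod_of_monic _ _ fun k _ => (monic_X_add_C (α k)).pow (I k)]
  simp

theorem eval₂_linearFactorProd {S : Type*} [CommRing S] (f : R →+* S) (x : S) :
    (linearFactorProd α I).eval₂ f x = ∏ k, (x + f (α k)) ^ I k := by
  simp [linearFactorProd, eval₂_finsetProd, eval₂_pow]

end CommRing

section IsDomain

variable [CommRing R] [IsDomain R] {α : ι → R}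

theorem roots_linearFactorProd (α : ι → R) (I : ι → ℕ) :
    (linearFactorProd α I).roots = ∑ k, I k • {-α k} := by
  rw [linearFactorProd, roots_prod _ _ (monic_linearFactorProd α I).ne_zero]
  simp only [roots_pow, roots_X_add_C]
  rfl

theorem count_roots_linearFactorProd [DecidableEq R] (hα : Function.Injective α) (I : ι → ℕ)
    (k : ι) : (linearFactorProd α I).roots.count (-α k) = I k := by
  rw [roots_linearFactorProd, Multiset.count_sum', Finset.sum_eq_single k]
  · simp
  · intro l _ hlk
    simp [hα.ne hlk.symm]
  · simp

theorem linearFactorProd_ne_C_mul (hα : Function.Injective α) {I J : ι → ℕ} (hIJ : I ≠ J)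
    {β : R} (hβ : β ≠ 0) : linearFactorProd α I ≠ C β * linearFactorProd α J := by
  classical
  intro h
  apply hIJ
  funext k
  rw [← count_roots_linearFactorProd hα I k, ← count_roots_linearFactorProd hα J k, h,
    roots_C_mul _ hβ]

end IsDomain

end Polynomial

theorem stmt_1_general (p : ℕ) (hp : p.Prime) (d : ℕ)
    (F : Type*) [Field F] [CharP F p]
    (γ : F)
    (hγ : ∀ P : Polynomial (ZMod p), P ≠ 0 → P.natDegree ≤ d →
      Polynomial.eval₂ (ZMod.castHom (dvd_refl p) F) γ P ≠ 0)
    {n : ℕ} (α : Fin n → ZMod p) (hα : Function.Injective α)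
    (I J : Fin n → ℕ) (hI : (∑ k, I k) ≤ d) (hJ : (∑ k, J k) ≤ d) (hIJ : I ≠ J)
    (β : ZMod p) (hβ : β ≠ 0) :
    ∏ k, (γ + (ZMod.castHom (dvd_refl p) F) (α k)) ^ I k ≠
      (ZMod.castHom (dvd_refl p) F) β *
        ∏ k, (γ + (ZMod.castHom (dvd_refl p) F) (α k)) ^ J k := by
  have : Fact p.Prime := ⟨hp⟩
  have hne : linearFactorProd α I - C β * linearFactorProd α J ≠ 0 :=
    sub_ne_zero.mpr (linearFactorProd_ne_C_mul hα hIJ hβ)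
  have hdeg : (linearFactorProd α I - C β * linearFactorProd α J).natDegree ≤ d := by
    refine (natDegree_sub_le _ _).trans (max_le ?_ ((natDegree_C_mul_le _ _).trans ?_))
    · exact (natDegree_linearFactorProd α I).le.trans hI
    · exact (natDegree_linearFactorProd α J).le.trans hJ
  intro h
  apply hγ _ hne hdeg
  rw [eval₂_sub, eval₂_mul, eval₂_C, eval₂_linearFactorProd, eval₂_linearFactorProd, h, sub_self]

theorem stmt_1 (p : ℕ) (hp : p.Prime) (d : ℕ) (hd : 1 ≤ d)
    (F : Type*) [Field F] [Fintype F] [CharP F p]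
    (hF : Fintype.card F = p ^ (d + 1))
    (γ : F)
    (hγ : ∀ P : Polynomial (ZMod p), P ≠ 0 → P.natDegree ≤ d →
      Polynomial.eval₂ (ZMod.castHom (dvd_refl p) F) γ P ≠ 0)
    {n : ℕ} (α : Fin n → ZMod p) (hα : Function.Injective α)
    (I J : Fin n → ℕ) (hI : (∑ k, I k) ≤ d) (hJ : (∑ k, J k) ≤ d) (hIJ : I ≠ J)
    (β : ZMod p) (hβ : β ≠ 0) :
    ∏ k, (γ + (ZMod.castHom (dvd_refl p) F) (α k)) ^ I k ≠
      (ZMod.castHom (dvd_refl p) F) β *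
        ∏ k, (γ + (ZMod.castHom (dvd_refl p) F) (α k)) ^ J k :=
  stmt_1_general p hp d F γ hγ α hα I J hI hJ hIJ β hβ
end

section
/- Let d and n be positive integers and let p be any prime with p ≥ n. Then there exists a d-Sidon sequence a_1, ..., a_n of nonnegative integers with 0 ≤ a_i < (p^{d+1} − 1)/(p − 1) for all 1 ≤ i ≤ n. -/
/-!
Bose–Chowla construction. Let `K = 𝔽_{p^(d+1)}`, let `θ` generate `K` over `𝔽_p`, let `g`
generate `Kˣ`, and let `a_k` be the discrete logarithm of `θ - k` reduced modulo
`m = (p^(d+1) - 1)/(p - 1)`. Since `m (p - 1) = #Kˣ`, every `m`-th power in `Kˣ` is fixed by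
Frobenius and so lies in `𝔽_pˣ`. Hence a coincidence `∑ I_k a_k = ∑ J_k a_k` makes
`∏ (θ - k)^(J_k)` an `𝔽_pˣ`-multiple of `∏ (θ - k)^(I_k)`. Both are values at `θ` of
polynomials of degree `≤ d < [K : 𝔽_p]`, so the polynomials themselves are proportional, and
unique factorisation into the distinct linear factors `X - k` gives `I = J`.
-/

/-- A sequence `a_1, ..., a_n` of nonnegative integers is a `d`-Sidon sequence if for any two
distinct vectors `I, J ∈ ℤ_{≥0}^n` with `wt(I), wt(J) ≤ d` one has
`∑ i_k a_k ≠ ∑ j_k a_k`. -/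
def IsSidonSeq (d : ℕ) {n : ℕ} (a : Fin n → ℕ) : Prop :=
  ∀ I J : Fin n → ℕ, (∑ k, I k) ≤ d → (∑ k, J k) ≤ d → I ≠ J →
    ∑ k, I k * a k ≠ ∑ k, J k * a k

open Polynomial

section PrimeField

variable {p : ℕ} [Fact p.Prime] {K : Type*} [Field K] [Algebra (ZMod p) K]

theorem exists_algebraMap_eq_of_pow_eq_self {x : K} (hx : x ^ p = x) :
    ∃ c : ZMod p, algebraMap (ZMod p) K c = x := by
  have : CharP K p := charP_of_injective_algebraMap' (ZMod p) p
  obtain ⟨z, rfl⟩ :=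
    (mem_bot_iff_intCast p K).1 ((Subfield.mem_bot_iff_pow_eq_self K p).2 hx)
  exact ⟨z, map_intCast _ z⟩

variable {m : ℕ}

theorem exists_algebraMap_eq_pow (hm : m * (p - 1) = Nat.card K - 1) (w : Kˣ) :
    ∃ c : ZMod p, c ≠ 0 ∧ algebraMap (ZMod p) K c = ((w ^ m : Kˣ) : K) := by
  have hp : 1 ≤ p := (Fact.out : p.Prime).one_le
  have hw : (w ^ m) ^ p = w ^ m := by
    rw [← Nat.sub_add_cancel hp, pow_succ, ← pow_mul, hm, ← Nat.card_units, pow_card_eq_one',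
      one_mul]
  obtain ⟨c, hc⟩ :=
    exists_algebraMap_eq_of_pow_eq_self (p := p) (x := ((w ^ m : Kˣ) : K)) <| by
      rw [← Units.val_pow_eq_pow_val, hw]
  exact ⟨c, by rintro rfl; exact (w ^ m).ne_zero (by simpa using hc.symm), hc⟩

theorem exists_algebraMap_mul_pow_of_modEq (hm : m * (p - 1) = Nat.card K - 1) (g : Kˣ)
    {A B : ℕ} (hAB : A ≡ B [MOD m]) :
    ∃ c : ZMod p, c ≠ 0 ∧ (g : K) ^ B = algebraMap (ZMod p) K c * (g : K) ^ A := by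
  obtain ⟨k, hk⟩ := Nat.modEq_iff_dvd.1 hAB
  obtain ⟨c, hc0, hc⟩ := exists_algebraMap_eq_pow hm (g ^ k)
  refine ⟨c, hc0, ?_⟩
  have : g ^ (B : ℤ) = (g ^ k) ^ m * g ^ (A : ℤ) := by
    rw [← zpow_natCast (g ^ k), ← zpow_mul, ← zpow_add, mul_comm, ← hk, sub_add_cancel]
  rw [hc, ← Units.val_pow_eq_pow_val, ← Units.val_pow_eq_pow_val, ← Units.val_mul,
    ← zpow_natCast, ← zpow_natCast g A, this]

end PrimeField

section Minpoly

variable {F L : Type*} [Field F] [Field L] [Algebra F L]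

theorem eq_zero_of_aeval_eq_zero_of_natDegree_lt {θ : L} {P : F[X]}
    (hP : P.natDegree < (minpoly F θ).natDegree) (h : aeval θ P = 0) : P = 0 := by
  by_contra hP0
  exact hP.not_ge (natDegree_le_natDegree (minpoly.degree_le_of_ne_zero F θ hP0 h))

theorem sub_algebraMap_ne_zero {θ : L} (hθ : 1 < (minpoly F θ).natDegree) (c : F) :
    θ - algebraMap F L c ≠ 0 := fun h =>
  X_sub_C_ne_zero c <| eq_zero_of_aeval_eq_zero_of_natDegree_lt (by rwa [natDegree_X_sub_C])
    (by simpa using h)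

end Minpoly

section ProdXSubC

variable {R : Type*} {ι : Type*} [Fintype ι]

theorem natDegree_prod_X_sub_C_pow [CommRing R] [Nontrivial R] (r : ι → R) (F : ι → ℕ) :
    (∏ k, (X - C (r k)) ^ F k).natDegree = ∑ k, F k := by
  rw [natDegree_prod_of_monic _ _ fun k _ => (monic_X_sub_C (r k)).pow _]
  simp only [(monic_X_sub_C _).natDegree_pow, natDegree_X_sub_C, mul_one]

theorem count_roots_prod_X_sub_C_pow [CommRing R] [IsDomain R] [DecidableEq R] {r : ι → R}
    (hr : Function.Injective r) (F : ι → ℕ) (k : ι) :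
    (∏ j, (X - C (r j)) ^ F j).roots.count (r k) = F k := by
  classical
  rw [roots_prod _ _ (Monic.ne_zero (monic_prod_of_monic _ _ fun j _ => (monic_X_sub_C _).pow _))]
  simp [Multiset.count_bind, Multiset.count_nsmul, Multiset.count_singleton, hr.eq_iff]

end ProdXSubC

theorem isSidonSeq_mod_of_pow_eq_sub_algebraMap {p : ℕ} [Fact p.Prime] {K : Type*} [Field K]
    [Algebra (ZMod p) K] {d n m : ℕ} (hm : m * (p - 1) = Nat.card K - 1) {θ : K}
    (hθ : d < (minpoly (ZMod p) θ).natDegree) {r : Fin n → ZMod p} (hr : Function.Injective r)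
    (g : Kˣ) {e : Fin n → ℕ} (he : ∀ k, (g : K) ^ e k = θ - algebraMap (ZMod p) K (r k)) :
    IsSidonSeq d fun k => e k % m := by
  intro I J hI hJ hIJ hsum
  set Q : (Fin n → ℕ) → (ZMod p)[X] := fun F => ∏ k, (X - C (r k)) ^ F k with hQ
  have hQ_aeval (F : Fin n → ℕ) : aeval θ (Q F) = (g : K) ^ ∑ k, F k * e k := by
    simp only [hQ, map_prod, map_pow, map_sub, aeval_X, aeval_C, ← he, ← pow_mul,
      Finset.prod_pow_eq_pow_sum, mul_comm]
  have hQ_natDegree (F : Fin n → ℕ) : (Q F).natDegree = ∑ k, F k :=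
    natDegree_prod_X_sub_C_pow r F
  have hmod_sum (F : Fin n → ℕ) : ∑ k, F k * (e k % m) ≡ ∑ k, F k * e k [MOD m] :=
    Nat.ModEq.sum fun k _ => (Nat.mod_modEq _ _).mul_left _
  obtain ⟨c, hc0, hc⟩ := exists_algebraMap_mul_pow_of_modEq hm g <|
    calc ∑ k, I k * e k ≡ ∑ k, I k * (e k % m) [MOD m] := (hmod_sum I).symm
      _ = ∑ k, J k * (e k % m) := hsum
      _ ≡ ∑ k, J k * e k [MOD m] := hmod_sum J
  have hQJ : Q J = C c * Q I := by
    rw [← sub_eq_zero]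
    refine eq_zero_of_aeval_eq_zero_of_natDegree_lt (θ := θ) ?_ ?_
    · refine (natDegree_sub_le _ _).trans_lt (max_lt ?_ ?_)
      · rw [hQ_natDegree]; omega
      · exact (natDegree_C_mul_le _ _).trans_lt (by rw [hQ_natDegree]; omega)
    · simp [hQ_aeval, hc]
  apply hIJ
  funext k
  rw [← count_roots_prod_X_sub_C_pow hr I k, ← count_roots_prod_X_sub_C_pow hr J k]
  change _ = (Q J).roots.count _
  rw [hQJ, roots_C_mul _ hc0]

theorem stmt_2_general (d n : ℕ) (hd : 0 < d)
    (p : ℕ) (hp : p.Prime) (hpn : n ≤ p) :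
    ∃ a : Fin n → ℕ, IsSidonSeq d a ∧
      ∀ i, a i < (p ^ (d + 1) - 1) / (p - 1) := by
  have : Fact p.Prime := ⟨hp⟩
  have : NeZero p := ⟨hp.ne_zero⟩
  let K := GaloisField p (d + 1)
  have hcard : Nat.card K = p ^ (d + 1) := GaloisField.card p (d + 1) (by omega)
  set m := (p ^ (d + 1) - 1) / (p - 1)
  have hm : m * (p - 1) = Nat.card K - 1 := by
    rw [hcard]
    exact Nat.div_mul_cancel (by simpa using Nat.sub_dvd_pow_sub_pow p 1 (d + 1))
  have hm_pos : 0 < m := Nat.pos_of_ne_zero fun hm0 => by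
    have := Nat.one_lt_pow (by omega : d + 1 ≠ 0) hp.one_lt
    rw [hm0, zero_mul, hcard] at hm
    omega
  obtain ⟨θ, hθ⟩ := Field.exists_primitive_element (ZMod p) K
  have hθ_deg : (minpoly (ZMod p) θ).natDegree = d + 1 := by
    rw [(Field.primitive_element_iff_minpoly_natDegree_eq _ θ).1 hθ,
      GaloisField.finrank p (by omega)]
  obtain ⟨g, hg⟩ := IsCyclic.exists_monoid_generator (α := Kˣ)
  let r : Fin n → ZMod p := ZMod.finEquiv p ∘ Fin.castLE hpn
  have hr : Function.Injective r := (ZMod.finEquiv p).injective.comp (Fin.castLE_injective hpn)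
  have he (k : Fin n) : ∃ e : ℕ, (g : K) ^ e = θ - algebraMap (ZMod p) K (r k) := by
    obtain ⟨e, he⟩ := hg (Units.mk0 _ (sub_algebraMap_ne_zero (θ := θ) (by omega) (r k)))
    exact ⟨e, by simpa using congrArg Units.val he⟩
  choose e he using he
  exact ⟨fun k => e k % m, isSidonSeq_mod_of_pow_eq_sub_algebraMap hm (by omega) hr g he,
    fun k => Nat.mod_lt _ hm_pos⟩

theorem stmt_2 (d n : ℕ) (hd : 0 < d) (hn : 0 < n)
    (p : ℕ) (hp : p.Prime) (hpn : n ≤ p) :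
    ∃ a : Fin n → ℕ, IsSidonSeq d a ∧
      ∀ i, a i < (p ^ (d + 1) - 1) / (p - 1) :=
  stmt_2_general d n hd p hp hpn
end

section
/- Let d and n be positive integers, let p be any prime with p ≥ n, and set M = (p^{d+1} − 1)/(p − 1). Then there exists a d-Sidon sequence a_1, ..., a_n satisfying dM ≤ a_i < (d+1)M for all 1 ≤ i ≤ n. -/
open Polynomial Finset Function IntermediateField Module

theorem IsSidonSeq.const_add {d n c : ℕ} {b : Fin n → ℕ} (hb : IsSidonSeq d b)
    (hc : ∀ I : Fin n → ℕ, ∑ k, I k ≤ d → ∑ k, I k * b k < c) :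
    IsSidonSeq d fun k => c + b k := by
  intro I J hI hJ hIJ hsum
  have hsplit : ∀ I : Fin n → ℕ, ∑ k, I k * (c + b k) = c * ∑ k, I k + ∑ k, I k * b k :=
    fun I => by simp only [mul_add, sum_add_distrib, mul_sum, mul_comm]
  refine hb I J hI hJ hIJ ?_
  simpa only [hsplit, Nat.mul_add_mod, Nat.mod_eq_of_lt (hc I hI), Nat.mod_eq_of_lt (hc J hJ)]
    using congrArg (· % c) hsum

theorem sum_mul_lt_mul_of_lt {ι : Type*} [Fintype ι] {d M : ℕ} {b I : ι → ℕ} (hd : 0 < d)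
    (hM : 0 < M) (hb : ∀ k, b k < M) (hI : ∑ k, I k ≤ d) : ∑ k, I k * b k < d * M :=
  calc ∑ k, I k * b k ≤ ∑ k, I k * (M - 1) :=
        sum_le_sum fun k _ => Nat.mul_le_mul_left _ (Nat.le_sub_one_of_lt (hb k))
    _ = (∑ k, I k) * (M - 1) := (sum_mul ..).symm
    _ ≤ d * (M - 1) := Nat.mul_le_mul_right _ hI
    _ < d * M := Nat.mul_lt_mul_of_pos_left (by omega) hd

section Polynomial

variable {R : Type*} [CommRing R] [IsDomain R] {ι : Type*} [Fintype ι] [DecidableEq ι]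

theorem rootMultiplicity_prod_X_sub_C_pow {x : ι → R} (hx : Injective x) (I : ι → ℕ) (k : ι) :
    (∏ j, (X - C (x j)) ^ I j).rootMultiplicity (x k) = I k := by
  rw [← prod_erase_mul _ _ (mem_univ k), rootMultiplicity_mul_X_sub_C_pow,
    rootMultiplicity_eq_zero, zero_add]
  · simp only [IsRoot, eval_prod, eval_pow, eval_sub, eval_X, eval_C]
    exact prod_ne_zero_iff.2 fun j hj =>
      pow_ne_zero _ (sub_ne_zero.2 (hx.ne (ne_of_mem_erase hj).symm))
  · exact prod_ne_zero_iff.2 fun j _ => pow_ne_zero _ (X_sub_C_ne_zero _)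

theorem prod_X_sub_C_pow_injective {x : ι → R} (hx : Injective x) :
    Injective fun I : ι → ℕ => ∏ j, (X - C (x j)) ^ I j := fun I J h =>
  funext fun k => by
    simpa only [rootMultiplicity_prod_X_sub_C_pow hx] using congrArg (rootMultiplicity (x k)) h

end Polynomial

section FieldExtension

variable {K L : Type*} [Field K] [Field L] [Algebra K L]

theorem FiniteField.mem_range_algebraMap_of_pow_card [Fintype K] {y : L}
    (hy : y ^ Fintype.card K = y) : y ∈ (algebraMap K L).range := by
  have hq := Fintype.one_lt_card (α := K)
  have hsplits : Splits (X ^ Fintype.card K - X : K[X]) := by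
    rw [splits_iff_card_roots, FiniteField.roots_X_pow_card_sub_X,
      FiniteField.X_pow_card_sub_X_natDegree_eq K hq]
    rfl
  exact hsplits.mem_range_of_isRoot (FiniteField.X_pow_card_sub_X_ne_zero K hq) (by simp [hy])

theorem IntermediateField.adjoin_simple_eq_top_of_forall_mem_zpowers {g : Lˣ}
    (hg : ∀ y, y ∈ Subgroup.zpowers g) : K⟮(g : L)⟯ = ⊤ := by
  refine eq_top_iff.2 fun y _ => ?_
  obtain rfl | hy := eq_or_ne y 0
  · exact zero_mem _
  obtain ⟨k, hk⟩ := hg (Units.mk0 y hy)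
  rw [← Units.val_mk0 hy, ← hk, Units.val_zpow_eq_zpow_val]
  exact zpow_mem (mem_adjoin_simple_self K _) k

theorem eq_zero_of_aeval_eq_zero_of_natDegree_lt_finrank [FiniteDimensional K L] {α : L}
    (hα : K⟮α⟯ = ⊤) {q : K[X]} (hq : q.natDegree < finrank K L) (h : aeval α q = 0) : q = 0 := by
  by_contra hq0
  have := natDegree_le_natDegree (minpoly.degree_le_of_ne_zero K α hq0 h)
  rw [(Field.primitive_element_iff_minpoly_natDegree_eq K α).1 hα] at this
  omega

end FieldExtension

theorem isSidonSeq_mod_of_pow_eq_sub {K L : Type*} [Field K] [Field L] [Algebra K L]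
    {d n M : ℕ} {θ : L} (hθ0 : θ ≠ 0)
    (hθ : ∀ q : K[X], q.natDegree ≤ d → aeval θ q = 0 → q = 0)
    (hM : θ ^ M ∈ (algebraMap K L).range) {x : Fin n → K} (hx : Injective x) {m : Fin n → ℕ}
    (hm : ∀ k, θ ^ m k = θ - algebraMap K L (x k)) : IsSidonSeq d fun k => m k % M := by
  obtain ⟨c, hc⟩ := hM
  have hc0 : c ≠ 0 := by
    rintro rfl
    exact pow_ne_zero M hθ0 (by rw [← hc, map_zero])
  set P : (Fin n → ℕ) → K[X] := fun I => ∏ k, (X - C (x k)) ^ I k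
  have hP_monic (I : Fin n → ℕ) : (P I).Monic :=
    monic_prod_of_monic _ _ fun k _ => (monic_X_sub_C _).pow _
  have hP_natDegree (I : Fin n → ℕ) : (P I).natDegree = ∑ k, I k := by
    rw [natDegree_prod_of_monic _ _ fun k _ => (monic_X_sub_C _).pow _]
    simp
  -- `θ - x k = θ ^ (m k % M) * (θ ^ M) ^ (m k / M)`, and `θ ^ M = c` lies in `K`
  have hP_aeval (I : Fin n → ℕ) : aeval θ (P I) =
      θ ^ (∑ k, I k * (m k % M)) * algebraMap K L (c ^ ∑ k, I k * (m k / M)) := by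
    simp only [P, map_prod, map_pow, map_sub, aeval_X, aeval_C, ← hm, hc, ← pow_mul,
      ← prod_pow_eq_pow_sum, ← prod_mul_distrib, ← pow_add]
    refine prod_congr rfl fun k _ => congrArg (θ ^ ·) ?_
    conv_lhs => rw [← Nat.mod_add_div (m k) M]
    ring
  intro I J hI hJ hIJ hsum
  set tI := ∑ k, I k * (m k / M)
  set tJ := ∑ k, J k * (m k / M)
  have hPIJ : C (c ^ tJ) * P I = C (c ^ tI) * P J := by
    refine sub_eq_zero.1 (hθ _ ?_ ?_)
    · refine (natDegree_sub_le _ _).trans (max_le ?_ ?_) <;>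
        refine (natDegree_C_mul_le _ _).trans ?_ <;> simpa [hP_natDegree]
    · rw [map_sub, map_mul, map_mul, aeval_C, aeval_C, hP_aeval, hP_aeval]
      simp only at hsum
      rw [hsum]
      ring
  have hlead : c ^ tJ = c ^ tI := by
    simpa [(hP_monic I).leadingCoeff, (hP_monic J).leadingCoeff] using
      congrArg leadingCoeff hPIJ
  rw [hlead] at hPIJ
  exact hIJ (prod_X_sub_C_pow_injective hx
    (mul_left_cancel₀ (C_ne_zero.2 (pow_ne_zero _ hc0)) hPIJ))

theorem stmt_3_general (d n : ℕ) (hd : 0 < d)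
    (p : ℕ) (hp : p.Prime) (hpn : n ≤ p)
    (M : ℕ) (hM : M = (p ^ (d + 1) - 1) / (p - 1)) :
    ∃ a : Fin n → ℕ, IsSidonSeq d a ∧
      ∀ i, d * M ≤ a i ∧ a i < (d + 1) * M := by
  have : Fact p.Prime := ⟨hp⟩
  set F := GaloisField p (d + 1)
  have hMpos : 0 < M := hM ▸ Nat.div_pos
    (Nat.sub_le_sub_right (Nat.le_self_pow d.succ_ne_zero p) 1) (Nat.sub_pos_of_lt hp.one_lt)
  obtain ⟨g, hg⟩ := IsCyclic.exists_generator (α := Fˣ)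
  have hg_deg (q : (ZMod p)[X]) (hq : q.natDegree ≤ d) (h : aeval (g : F) q = 0) : q = 0 :=
    eq_zero_of_aeval_eq_zero_of_natDegree_lt_finrank (adjoin_simple_eq_top_of_forall_mem_zpowers hg)
      (by rw [GaloisField.finrank p d.succ_ne_zero]; omega) h
  have hgM : (g : F) ^ M ∈ (algebraMap (ZMod p) F).range := by
    have hg1 : (g ^ M) ^ (p - 1) = 1 := by
      rw [← pow_mul, hM, Nat.div_mul_cancel (Nat.sub_one_dvd_pow_sub_one p (d + 1)),
        ← GaloisField.card p (d + 1) d.succ_ne_zero, ← Nat.card_units]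
      exact pow_card_eq_one'
    refine FiniteField.mem_range_algebraMap_of_pow_card ?_
    rw [ZMod.card, ← pow_sub_one_mul hp.ne_zero, ← Units.val_pow_eq_pow_val,
      ← Units.val_pow_eq_pow_val, hg1, Units.val_one, one_mul]
  set x : Fin n → ZMod p := fun k => (k : ℕ)
  have hx : Injective x := fun k l hkl => Fin.ext <| by
    simpa [x, Nat.mod_eq_of_lt (k.2.trans_le hpn), Nat.mod_eq_of_lt (l.2.trans_le hpn)] using
      (ZMod.natCast_eq_natCast_iff' _ _ _).1 hkl
  have hm (k : Fin n) : ∃ m, (g : F) ^ m = g - algebraMap _ _ (x k) := by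
    have hne : (g : F) - algebraMap _ _ (x k) ≠ 0 := fun h => X_sub_C_ne_zero (x k)
      (hg_deg _ (by rw [natDegree_X_sub_C]; exact hd) (by simpa using h))
    obtain ⟨m, hm⟩ := mem_powers_iff_mem_zpowers.2 (hg (Units.mk0 _ hne))
    exact ⟨m, by simpa using congrArg Units.val hm⟩
  choose m hm using hm
  refine ⟨fun k => d * M + m k % M, ?_, fun k => ⟨Nat.le_add_right _ _, ?_⟩⟩
  · exact (isSidonSeq_mod_of_pow_eq_sub g.ne_zero hg_deg hgM hx hm).const_add
      fun I hI => sum_mul_lt_mul_of_lt hd hMpos (fun k => Nat.mod_lt _ hMpos) hI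
  · show d * M + m k % M < (d + 1) * M
    rw [add_mul, one_mul]
    exact Nat.add_lt_add_left (Nat.mod_lt _ hMpos) _

theorem stmt_3 (d n : ℕ) (hd : 0 < d) (hn : 0 < n)
    (p : ℕ) (hp : p.Prime) (hpn : n ≤ p)
    (M : ℕ) (hM : M = (p ^ (d + 1) - 1) / (p - 1)) :
    ∃ a : Fin n → ℕ, IsSidonSeq d a ∧
      ∀ i, d * M ≤ a i ∧ a i < (d + 1) * M :=
  stmt_3_general d n hd p hp hpn M hM
end

section
/- Let q be a prime power and let d, k, m be integers with d ≥ 2 and d(k−1) < m ≤ q. Then there exists a (d, k, m)_q-multiplication friendly pair (π, ψ) such that every nonzero vector in the F_q-linear span of the set {π(α_1) ∗ π(α_2) ∗ ⋯ ∗ π(α_d) : α_1, ..., α_d ∈ F_{q^k}} has Hamming weight at least m − d(k−1). -/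
/-!
A power basis `1, θ, …, θ^(k-1)` identifies `K` with the polynomials of degree `< k` over `Fq`;
let `π` evaluate these at `m` distinct points of `Fq`. A product of `d` values of `π` is then the
evaluation of a polynomial of degree `≤ d(k-1) < m`, so Lagrange interpolation recovers that
polynomial and evaluating it at `θ` gives the product in `K`. The span of such products lies in the
Reed–Solomon code of polynomials of degree `≤ d(k-1)`, and a nonzero such polynomial has at most
`d(k-1)` roots.
-/

/-- `(π, ψ)` is a `(d, k, m)_q`-multiplication friendly pair (with `Fq` the field with `q`
elements and `K` the field with `q^k` elements): `π : K → Fq^m` and `ψ : Fq^m → K` are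
`Fq`-linear, `π 1 = (1, ..., 1)`, and `ψ(π(α_1) ∗ ⋯ ∗ π(α_d)) = α_1 ⋯ α_d` for all `α_i ∈ K`,
where `∗` is the coordinatewise product. -/
def IsMulFriendlyPair (Fq K : Type*) [Field Fq] [Field K] [Algebra Fq K]
    (d m : ℕ) (π : K →ₗ[Fq] (Fin m → Fq)) (ψ : (Fin m → Fq) →ₗ[Fq] K) : Prop :=
  π 1 = 1 ∧ ∀ α : Fin d → K, ψ (∏ i, π (α i)) = ∏ i, α i

open Polynomial

namespace PowerBasis

variable {R S : Type*} [CommRing R] [Ring S] [Algebra R S] (pb : PowerBasis R S)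

noncomputable def toPolynomial : S →ₗ[R] R[X] :=
  (degreeLT R pb.dim).subtype ∘ₗ (degreeLTEquiv R pb.dim).symm.toLinearMap ∘ₗ
    pb.basis.equivFun.toLinearMap

theorem toPolynomial_mem_degreeLT (x : S) : pb.toPolynomial x ∈ degreeLT R pb.dim :=
  ((degreeLTEquiv R pb.dim).symm _).2

theorem toPolynomial_apply (x : S) :
    pb.toPolynomial x = ∑ i : Fin pb.dim, monomial i (pb.basis.equivFun x i) :=
  rfl

theorem natDegree_toPolynomial_le (x : S) : (pb.toPolynomial x).natDegree ≤ pb.dim - 1 := by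
  have hdeg := mem_degreeLT.mp (pb.toPolynomial_mem_degreeLT x)
  by_cases h : pb.toPolynomial x = 0
  · simp [h]
  · have hnat := (natDegree_lt_iff_degree_lt h).mpr hdeg
    omega

theorem aeval_toPolynomial (x : S) : aeval pb.gen (pb.toPolynomial x) = x := by
  conv_rhs => rw [← pb.basis.sum_equivFun x]
  simp [toPolynomial_apply, aeval_monomial, Algebra.smul_def, pb.coe_basis]

theorem toPolynomial_one [Nontrivial S] : pb.toPolynomial 1 = 1 := by
  have hone : (1 : S) = pb.basis ⟨0, pb.dim_pos⟩ := by simp [pb.coe_basis]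
  rw [toPolynomial_apply, hone]
  simp only [Module.Basis.equivFun_apply, Module.Basis.repr_self]
  simp [Finsupp.single_apply, apply_ite (monomial _)]

end PowerBasis

namespace Polynomial

variable {F ι : Type*} [Field F]

noncomputable abbrev evalPoints (a : ι → F) : F[X] →ₐ[F] (ι → F) :=
  AlgHom.pi fun j => aeval (a j)

theorem evalPoints_apply (a : ι → F) (Q : F[X]) (j : ι) : evalPoints a Q j = Q.eval (a j) := by
  simp

variable [Fintype ι] {a : ι → F}

theorem interpolate_evalPoints [DecidableEq ι] (ha : Function.Injective a) {Q : F[X]}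
    (hQ : Q.degree < Fintype.card ι) : Lagrange.interpolate Finset.univ a (evalPoints a Q) = Q :=
  (Lagrange.eq_interpolate ha.injOn (by simpa using hQ)).symm

theorem card_sub_natDegree_le_hammingNorm [DecidableEq F] (ha : Function.Injective a)
    {Q : F[X]} (hQ : Q ≠ 0) : Fintype.card ι - Q.natDegree ≤ hammingNorm (evalPoints a Q) := by
  set zeros := Finset.univ.filter fun j => evalPoints a Q j = 0
  have hzeros : zeros.card ≤ Q.natDegree := by
    rw [← Finset.card_map ⟨a, ha⟩]
    refine card_le_degree_of_subset_roots fun x hx => ?_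
    obtain ⟨j, hj, rfl⟩ := Finset.mem_map.mp hx
    rw [mem_roots hQ, IsRoot, ← evalPoints_apply]
    exact (Finset.mem_filter.mp hj).2
  have hsplit : zeros.card + hammingNorm (evalPoints a Q) = Fintype.card ι :=
    Finset.card_filter_add_card_filter_not _
  omega

theorem card_sub_le_hammingNorm_of_mem_map_degreeLE [DecidableEq F] (ha : Function.Injective a)
    {n : ℕ} {v : ι → F} (hv : v ∈ (degreeLE F n).map (evalPoints a).toLinearMap) (hv0 : v ≠ 0) :
    Fintype.card ι - n ≤ hammingNorm v := by
  obtain ⟨Q, hQ, rfl⟩ := hv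
  have hQ0 : Q ≠ 0 := by
    rintro rfl
    exact hv0 (map_zero _)
  have hQn : Q.natDegree ≤ n := natDegree_le_iff_degree_le.mpr (mem_degreeLE.mp hQ)
  have hweight := card_sub_natDegree_le_hammingNorm ha hQ0
  simp only [AlgHom.toLinearMap_apply] at hweight ⊢
  omega

end Polynomial

namespace PowerBasis

variable {F K : Type*} [Field F] [Field K] [Algebra F K] (pb : PowerBasis F K) {m : ℕ}
  (a : Fin m → F)

noncomputable def evalEncode : K →ₗ[F] (Fin m → F) :=
  (evalPoints a).toLinearMap ∘ₗ pb.toPolynomial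

noncomputable def interpolateDecode : (Fin m → F) →ₗ[F] K :=
  (aeval pb.gen).toLinearMap ∘ₗ Lagrange.interpolate Finset.univ a

theorem prod_evalEncode {d : ℕ} (α : Fin d → K) :
    ∏ i, pb.evalEncode a (α i) = evalPoints a (∏ i, pb.toPolynomial (α i)) :=
  (map_prod (evalPoints a) _ _).symm

theorem natDegree_prod_toPolynomial_le {d : ℕ} (α : Fin d → K) :
    (∏ i, pb.toPolynomial (α i)).natDegree ≤ d * (pb.dim - 1) :=
  (natDegree_prod_le _ _).trans <|
    (Finset.sum_le_sum fun i _ => pb.natDegree_toPolynomial_le (α i)).trans_eq (by simp)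

theorem isMulFriendlyPair {a : Fin m → F} (ha : Function.Injective a) {d : ℕ}
    (hm : d * (pb.dim - 1) < m) :
    IsMulFriendlyPair F K d m (pb.evalEncode a) (pb.interpolateDecode a) := by
  refine ⟨by simp [evalEncode, pb.toPolynomial_one], fun α => ?_⟩
  have hdeg : (∏ i, pb.toPolynomial (α i)).degree < Fintype.card (Fin m) := by
    refine degree_le_natDegree.trans_lt ?_
    exact_mod_cast (pb.natDegree_prod_toPolynomial_le α).trans_lt (by simpa using hm)
  rw [prod_evalEncode, interpolateDecode, LinearMap.comp_apply, interpolate_evalPoints ha hdeg,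
    AlgHom.toLinearMap_apply, map_prod]
  simp only [aeval_toPolynomial]

theorem span_prod_evalEncode_le {d : ℕ} :
    Submodule.span F {w | ∃ α : Fin d → K, w = ∏ i, pb.evalEncode a (α i)} ≤
      (degreeLE F ↑(d * (pb.dim - 1))).map (evalPoints a).toLinearMap := by
  rw [Submodule.span_le]
  rintro w ⟨α, rfl⟩
  refine ⟨_, ?_, (pb.prod_evalEncode a α).symm⟩
  exact mem_degreeLE.mpr (natDegree_le_iff_degree_le.mp (pb.natDegree_prod_toPolynomial_le α))

end PowerBasis

theorem stmt_5_general (q k m d : ℕ)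
    (hm1 : d * (k - 1) < m) (hm2 : m ≤ q)
    (Fq K : Type*) [Field Fq] [Fintype Fq] [DecidableEq Fq]
    [Field K] [Fintype K] [Algebra Fq K]
    (hcq : Fintype.card Fq = q) (hcK : Fintype.card K = q ^ k) :
    ∃ (π : K →ₗ[Fq] (Fin m → Fq)) (ψ : (Fin m → Fq) →ₗ[Fq] K),
      IsMulFriendlyPair Fq K d m π ψ ∧
      ∀ v ∈ Submodule.span Fq {w : Fin m → Fq | ∃ α : Fin d → K, w = ∏ i, π (α i)},
        v ≠ 0 → m - d * (k - 1) ≤ hammingNorm v := by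
  let pb := Field.powerBasisOfFiniteOfSeparable Fq K
  have hdim : pb.dim = k := by
    have hcard := Module.card_eq_pow_finrank (K := Fq) (V := K)
    rw [pb.finrank, hcK, hcq] at hcard
    have hq_one_lt : 1 < q := hcq ▸ Fintype.one_lt_card
    exact (Nat.pow_right_injective hq_one_lt hcard).symm
  obtain ⟨a⟩ : Nonempty (Fin m ↪ Fq) :=
    Function.Embedding.nonempty_of_card_le (by simpa [hcq] using hm2)
  refine ⟨pb.evalEncode a, pb.interpolateDecode a, pb.isMulFriendlyPair a.injective (hdim ▸ hm1),
    fun v hv hv0 => ?_⟩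
  simpa [hdim] using card_sub_le_hammingNorm_of_mem_map_degreeLE a.injective
    (pb.span_prod_evalEncode_le a hv) hv0

theorem stmt_5 (q k m d : ℕ) (hq : IsPrimePow q) (hd : 2 ≤ d) (hk : 1 ≤ k)
    (hm1 : d * (k - 1) < m) (hm2 : m ≤ q)
    (Fq K : Type*) [Field Fq] [Fintype Fq] [DecidableEq Fq]
    [Field K] [Fintype K] [Algebra Fq K]
    (hcq : Fintype.card Fq = q) (hcK : Fintype.card K = q ^ k) :
    ∃ (π : K →ₗ[Fq] (Fin m → Fq)) (ψ : (Fin m → Fq) →ₗ[Fq] K),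
      IsMulFriendlyPair Fq K d m π ψ ∧
      ∀ v ∈ Submodule.span Fq {w : Fin m → Fq | ∃ α : Fin d → K, w = ∏ i, π (α i)},
        v ≠ 0 → m - d * (k - 1) ≤ hammingNorm v :=
  stmt_5_general q k m d hm1 hm2 Fq K hcq hcK
end

section
/- Let K be a field, let d ≥ 1 be an integer, and let a_1, ..., a_n be a d-Sidon sequence. If F ∈ K[x_1, ..., x_n] is a nonzero multivariate polynomial of total degree at most d, then the univariate polynomial F(x^{a_1}, x^{a_2}, ..., x^{a_n}) ∈ K[x], obtained by substituting x^{a_i} for x_i, is nonzero and has degree at most d · max_{1≤i≤n} a_i. -/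
open Finsupp

namespace MvPolynomial

variable {σ R : Type*} [CommSemiring R] (w : σ → ℕ)

theorem aeval_X_pow_monomial (m : σ →₀ ℕ) (c : R) :
    aeval (fun i => (Polynomial.X : Polynomial R) ^ w i) (monomial m c) =
      Polynomial.monomial (weight w m) c := by
  rw [aeval_monomial, ← Polynomial.C_mul_X_pow_eq_monomial, weight_apply, Finsupp.prod,
    Finsupp.sum, Polynomial.algebraMap_eq]
  simp_rw [← pow_mul, smul_eq_mul, mul_comm, Finset.prod_pow_eq_pow_sum]

theorem aeval_X_pow_eq_sum (F : MvPolynomial σ R) :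
    aeval (fun i => (Polynomial.X : Polynomial R) ^ w i) F =
      ∑ m ∈ F.support, Polynomial.monomial (weight w m) (F.coeff m) := by
  conv_lhs => rw [F.as_sum]
  simp only [map_sum, aeval_X_pow_monomial]

theorem natDegree_aeval_X_pow_le (F : MvPolynomial σ R) :
    (aeval (fun i => (Polynomial.X : Polynomial R) ^ w i) F).natDegree ≤
      F.weightedTotalDegree w := by
  rw [aeval_X_pow_eq_sum]
  exact Polynomial.natDegree_sum_le_of_forall_le _ _ fun m hm =>
    (Polynomial.natDegree_monomial_le _).trans (le_weightedTotalDegree w hm)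

theorem coeff_aeval_X_pow_of_injOn {F : MvPolynomial σ R}
    (hw : Set.InjOn (weight w) (F.support : Set (σ →₀ ℕ))) {m : σ →₀ ℕ} (hm : m ∈ F.support) :
    (aeval (fun i => (Polynomial.X : Polynomial R) ^ w i) F).coeff (weight w m) = F.coeff m := by
  classical
  rw [aeval_X_pow_eq_sum, Polynomial.finsetSum_coeff, Finset.sum_eq_single m]
  · simp
  · intro m' hm' hne
    rw [Polynomial.coeff_monomial, if_neg fun h => hne (hw hm' hm h)]
  · exact fun h => absurd hm h

theorem aeval_X_pow_ne_zero_of_injOn {F : MvPolynomial σ R}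
    (hw : Set.InjOn (weight w) (F.support : Set (σ →₀ ℕ))) (hF : F ≠ 0) :
    aeval (fun i => (Polynomial.X : Polynomial R) ^ w i) F ≠ 0 := by
  obtain ⟨m, hm⟩ := support_nonempty.mpr hF
  intro h
  have := coeff_aeval_X_pow_of_injOn w hw hm
  rw [h, Polynomial.coeff_zero] at this
  exact mem_support_iff.mp hm this.symm

theorem weight_le_degree_mul {B : ℕ} (hB : ∀ i, w i ≤ B) (m : σ →₀ ℕ) :
    weight w m ≤ m.degree * B := by
  rw [weight_apply, degree_apply, Finsupp.sum, Finset.sum_mul]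
  exact Finset.sum_le_sum fun i _ => Nat.mul_le_mul_left _ (hB i)

theorem degree_le_totalDegree {F : MvPolynomial σ R} {m : σ →₀ ℕ} (hm : m ∈ F.support) :
    m.degree ≤ F.totalDegree :=
  le_totalDegree hm

theorem weightedTotalDegree_le_totalDegree_mul {B : ℕ} (hB : ∀ i, w i ≤ B)
    (F : MvPolynomial σ R) : F.weightedTotalDegree w ≤ F.totalDegree * B :=
  Finset.sup_le fun _ hm =>
    (weight_le_degree_mul w hB _).trans (Nat.mul_le_mul_right _ (degree_le_totalDegree hm))

end MvPolynomial

theorem IsSidonSeq.injOn_weight {d n : ℕ} {a : Fin n → ℕ} (ha : IsSidonSeq d a) :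
    Set.InjOn (weight a) {m | m.degree ≤ d} := by
  intro I hI J hJ hIJ
  simp only [Set.mem_ofPred_eq, degree_eq_sum] at hI hJ
  simp only [weight_eq_sum, smul_eq_mul] at hIJ
  by_contra hne
  exact ha I J hI hJ (fun h => hne (DFunLike.coe_injective h)) hIJ

theorem stmt_6_general (K : Type*) [Field K] (d : ℕ) {n : ℕ}
    (a : Fin n → ℕ) (ha : IsSidonSeq d a)
    (F : MvPolynomial (Fin n) K) (hF : F ≠ 0) (hdeg : F.totalDegree ≤ d) :
    MvPolynomial.aeval (fun i => (Polynomial.X : Polynomial K) ^ a i) F ≠ 0 ∧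
    (MvPolynomial.aeval (fun i => (Polynomial.X : Polynomial K) ^ a i) F).natDegree
      ≤ d * Finset.univ.sup a := by
  have hinj : Set.InjOn (weight a) (F.support : Set (Fin n →₀ ℕ)) := ha.injOn_weight.mono fun _ hm =>
    (MvPolynomial.degree_le_totalDegree hm).trans hdeg
  refine ⟨MvPolynomial.aeval_X_pow_ne_zero_of_injOn a hinj hF, ?_⟩
  calc _ ≤ F.weightedTotalDegree a := MvPolynomial.natDegree_aeval_X_pow_le a F
    _ ≤ F.totalDegree * Finset.univ.sup a := MvPolynomial.weightedTotalDegree_le_totalDegree_mul a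
        (fun i => Finset.le_sup (Finset.mem_univ i)) F
    _ ≤ d * Finset.univ.sup a := Nat.mul_le_mul_right _ hdeg

theorem stmt_6 (K : Type*) [Field K] (d : ℕ) (hd : 1 ≤ d) {n : ℕ}
    (a : Fin n → ℕ) (ha : IsSidonSeq d a)
    (F : MvPolynomial (Fin n) K) (hF : F ≠ 0) (hdeg : F.totalDegree ≤ d) :
    MvPolynomial.aeval (fun i => (Polynomial.X : Polynomial K) ^ a i) F ≠ 0 ∧
    (MvPolynomial.aeval (fun i => (Polynomial.X : Polynomial K) ^ a i) F).natDegree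
      ≤ d * Finset.univ.sup a :=
  stmt_6_general K d a ha F hF hdeg
end

section
/- Let q be a prime power, let d ≥ 1 be an integer, and let a_1, ..., a_n be a d-Sidon sequence with max_{1≤i≤n} a_i ≤ L and dL < q. Let T be the multiset {(β^{a_1}, β^{a_2}, ..., β^{a_n}) : β ∈ F_q} of q points in F_q^n. Then the punctured Reed–Muller code RM_q(n,d)|_T is an F_q-linear code of length q, dimension binom(n+d, n), and minimum distance at least q − dL. -/
/-- The punctured Reed–Muller code `RM_q(n,d)|_T`: the evaluations of all `n`-variate
polynomials of total degree at most `d` at the (multi)set of points `T`. -/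
noncomputable def puncturedRM (Fq : Type*) [Field Fq] (n d : ℕ) {ι : Type*}
    (T : ι → (Fin n → Fq)) : Submodule Fq (ι → Fq) :=
  (MvPolynomial.restrictTotalDegree (Fin n) Fq d).map
    (LinearMap.pi fun j => (MvPolynomial.aeval (T j)).toLinearMap)

/-
Substituting `x_i ↦ X ^ a_i` turns a polynomial `F` of total degree at most `d` into a
univariate polynomial `P` of degree at most `d L` with `P(β) = F(β^a_1, …, β^a_n)`. The Sidon
property sends distinct monomials of degree at most `d` to distinct powers of `X`, so `P ≠ 0`
whenever `F ≠ 0`. Hence a nonzero codeword vanishes at no more than `d L` of the `q` points,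
which gives the distance bound; since `d L < q` it also makes evaluation injective on polynomials
of degree at most `d`, whose dimension is `binom(n + d, n)` by stars and bars.
-/

open MvPolynomial Finset
open scoped Polynomial

section Counting

variable (σ : Type*) [Fintype σ] (d : ℕ)

def sumLeEquivSumEq : {f : σ → ℕ // ∑ i, f i ≤ d} ≃ {g : Option σ → ℕ // ∑ i, g i = d} where
  toFun f := ⟨fun o => o.elim (d - ∑ i, f.1 i) f.1, by
    have := f.2
    rw [Fintype.sum_option]
    simp only [Option.elim_none, Option.elim_some]
    omega⟩
  invFun g := ⟨fun i => g.1 (some i), by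
    have := g.2
    rw [Fintype.sum_option] at this
    exact Nat.le.intro ((add_comm _ _).trans this)⟩
  left_inv f := rfl
  right_inv g := by
    have := g.2
    rw [Fintype.sum_option] at this
    ext (_ | i)
    · simp only [Option.elim_none]
      omega
    · rfl

noncomputable def degreeLeEquivSym [DecidableEq σ] :
    {m : σ →₀ ℕ // (m.sum fun _ e => e) ≤ d} ≃ Sym (Option σ) d :=
  (Finsupp.equivFunOnFinite.subtypeEquiv fun m : σ →₀ ℕ => by
    rw [Finsupp.sum_fintype _ _ fun _ => rfl]; rfl).trans <|
    (sumLeEquivSumEq σ d).trans (Sym.equivNatSumOfFintype (Option σ) d).symm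

theorem natCard_finsupp_degree_le :
    Nat.card {m : σ →₀ ℕ // (m.sum fun _ e => e) ≤ d} = (Fintype.card σ + d).choose d := by
  classical
  rw [Nat.card_congr (degreeLeEquivSym σ d), Sym.natCard_sym_eq_multichoose, Nat.multichoose_eq,
    Nat.card_eq_fintype_card, Fintype.card_option, Nat.add_right_comm, Nat.add_sub_cancel]

theorem MvPolynomial.finrank_restrictTotalDegree (R : Type*) [CommRing R] [Nontrivial R] :
    Module.finrank R (restrictTotalDegree σ R d) = (Fintype.card σ + d).choose d :=
  (Module.finrank_eq_nat_card_basis (basisRestrictSupport R _)).trans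
    (natCard_finsupp_degree_le σ d)

end Counting

theorem Submodule.finrank_map_of_injOn {K V W : Type*} [DivisionRing K] [AddCommGroup V]
    [Module K V] [AddCommGroup W] [Module K W] (f : V →ₗ[K] W) {p : Submodule K V}
    (hf : ∀ x ∈ p, f x = 0 → x = 0) : Module.finrank K (p.map f) = Module.finrank K p := by
  have hinj : Function.Injective (f ∘ₗ p.subtype) :=
    LinearMap.ker_eq_bot.mp <| LinearMap.ker_eq_bot'.mpr fun x hx => Subtype.ext (hf x x.2 hx)
  rw [← LinearMap.finrank_range_of_inj hinj, LinearMap.range_comp, Submodule.range_subtype]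

theorem Polynomial.card_sub_natDegree_le_hammingNorm_eval {R : Type*} [CommRing R] [IsDomain R]
    [Fintype R] [DecidableEq R] {p : R[X]} (hp : p ≠ 0) :
    Fintype.card R - p.natDegree ≤ hammingNorm fun x => p.eval x := by
  have hroots : #{x | p.eval x = 0} ≤ p.natDegree :=
    Polynomial.card_le_degree_of_subset_roots fun x hx => by simp_all
  have := card_filter_add_card_filter_not (s := univ) fun x => p.eval x = 0
  rw [hammingNorm, card_univ] at *
  simp only [ne_eq] at *
  omega

section PowSubst

variable {σ R : Type*} [CommSemiring R]

noncomputable def powSubst (a : σ → ℕ) : MvPolynomial σ R →ₐ[R] R[X] :=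
  aeval fun i => Polynomial.X ^ a i

theorem eval_powSubst (a : σ → ℕ) (F : MvPolynomial σ R) (β : R) :
    (powSubst a F).eval β = aeval (fun i => β ^ a i) F := by
  rw [← Polynomial.coe_aeval_eq_eval, powSubst, comp_aeval_apply]
  simp

variable [Fintype σ]

theorem MvPolynomial.sum_le_totalDegree {F : MvPolynomial σ R} {m : σ →₀ ℕ}
    (hm : m ∈ F.support) : ∑ i, m i ≤ F.totalDegree := by
  have := le_totalDegree hm
  rwa [Finsupp.sum_fintype _ _ fun _ => rfl] at this

theorem powSubst_monomial (a : σ → ℕ) (m : σ →₀ ℕ) (c : R) :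
    powSubst a (monomial m c) = Polynomial.C c * Polynomial.X ^ ∑ i, m i * a i := by
  rw [powSubst, aeval_monomial, Finsupp.prod_fintype _ _ fun _ => pow_zero _]
  simp_rw [← pow_mul, mul_comm (a _)]
  rw [prod_pow_eq_pow_sum, Polynomial.algebraMap_eq]

theorem powSubst_eq_sum (a : σ → ℕ) (F : MvPolynomial σ R) :
    powSubst a F = ∑ m ∈ F.support, Polynomial.C (coeff m F) * Polynomial.X ^ ∑ i, m i * a i := by
  conv_lhs => rw [F.as_sum]
  simp only [map_sum, powSubst_monomial]

theorem natDegree_powSubst_le {a : σ → ℕ} {L : ℕ} (haL : ∀ i, a i ≤ L) (F : MvPolynomial σ R) :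
    (powSubst a F).natDegree ≤ F.totalDegree * L := by
  rw [powSubst_eq_sum]
  refine Polynomial.natDegree_sum_le_of_forall_le _ _ fun m hm =>
    (Polynomial.natDegree_C_mul_X_pow_le _ _).trans ?_
  calc ∑ i, m i * a i ≤ ∑ i, m i * L := sum_le_sum fun i _ => Nat.mul_le_mul_left _ (haL i)
    _ = (∑ i, m i) * L := (sum_mul ..).symm
    _ ≤ F.totalDegree * L := Nat.mul_le_mul_right _ (sum_le_totalDegree hm)

end PowSubst

section Sidon

variable {R : Type*} [CommSemiring R] {n d : ℕ} {a : Fin n → ℕ}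

theorem coeff_powSubst_of_isSidonSeq (ha : IsSidonSeq d a) {F : MvPolynomial (Fin n) R}
    (hF : F.totalDegree ≤ d) {m : Fin n →₀ ℕ} (hm : ∑ i, m i ≤ d) :
    (powSubst a F).coeff (∑ i, m i * a i) = coeff m F := by
  rw [powSubst_eq_sum, Polynomial.finsetSum_coeff, sum_eq_single m]
  · simp
  · intro m' hm' hne
    have hweight : ∑ i, m' i * a i ≠ ∑ i, m i * a i :=
      ha m' m ((sum_le_totalDegree hm').trans hF) hm (fun h => hne (DFunLike.coe_injective h))
    simp [Polynomial.coeff_C_mul, Polynomial.coeff_X_pow, hweight.symm]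
  · intro hm'
    simp [notMem_support_iff.mp hm']

theorem powSubst_ne_zero_of_isSidonSeq (ha : IsSidonSeq d a) {F : MvPolynomial (Fin n) R}
    (hF : F.totalDegree ≤ d) (hF0 : F ≠ 0) : powSubst a F ≠ 0 := by
  obtain ⟨m, hm⟩ := support_nonempty.mpr hF0
  intro h
  have := coeff_powSubst_of_isSidonSeq ha hF ((sum_le_totalDegree hm).trans hF)
  rw [h, Polynomial.coeff_zero] at this
  exact mem_support_iff.mp hm this.symm

theorem card_sub_le_hammingNorm_aeval_pow {R : Type*} [CommRing R] [IsDomain R] [Fintype R]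
    [DecidableEq R] (ha : IsSidonSeq d a) {L : ℕ} (haL : ∀ i, a i ≤ L)
    {F : MvPolynomial (Fin n) R} (hF : F.totalDegree ≤ d) (hF0 : F ≠ 0) :
    Fintype.card R - d * L ≤ hammingNorm fun β : R => aeval (fun i => β ^ a i) F :=
  calc Fintype.card R - d * L ≤ Fintype.card R - (powSubst a F).natDegree :=
        Nat.sub_le_sub_left ((natDegree_powSubst_le haL F).trans (Nat.mul_le_mul_right L hF)) _
    _ ≤ hammingNorm fun β => (powSubst a F).eval β :=
        Polynomial.card_sub_natDegree_le_hammingNorm_eval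
          (powSubst_ne_zero_of_isSidonSeq ha hF hF0)
    _ = hammingNorm fun β : R => aeval (fun i => β ^ a i) F := by simp only [eval_powSubst]

end Sidon

theorem stmt_7_general (q : ℕ) (d : ℕ) {n : ℕ}
    (Fq : Type*) [Field Fq] [Fintype Fq] [DecidableEq Fq] (hcq : Fintype.card Fq = q)
    (a : Fin n → ℕ) (ha : IsSidonSeq d a)
    (L : ℕ) (haL : ∀ i, a i ≤ L) (hLq : d * L < q) :
    Module.finrank Fq (puncturedRM Fq n d (fun (β : Fq) (i : Fin n) => β ^ a i))
        = (n + d).choose n ∧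
      ∀ c ∈ puncturedRM Fq n d (fun (β : Fq) (i : Fin n) => β ^ a i), c ≠ 0 →
        q - d * L ≤ hammingNorm c := by
  set E : MvPolynomial (Fin n) Fq →ₗ[Fq] (Fq → Fq) :=
    LinearMap.pi fun β => (aeval fun i => β ^ a i).toLinearMap
  have hdist : ∀ F ∈ restrictTotalDegree (Fin n) Fq d, F ≠ 0 → q - d * L ≤ hammingNorm (E F) :=
    fun F hF hF0 => hcq ▸
      card_sub_le_hammingNorm_aeval_pow ha haL ((mem_restrictTotalDegree _ _ _).mp hF) hF0
  refine ⟨?_, fun c hc hc0 => ?_⟩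
  · rw [puncturedRM, Submodule.finrank_map_of_injOn, finrank_restrictTotalDegree,
      Fintype.card_fin, Nat.choose_symm_add]
    intro F hF hEF
    by_contra hF0
    have := hdist F hF hF0
    rw [hEF, hammingNorm_zero] at this
    omega
  · obtain ⟨F, hF, rfl⟩ := Submodule.mem_map.mp hc
    exact hdist F hF fun hF0 => hc0 (by rw [hF0, map_zero])

theorem stmt_7 (q : ℕ) (hq : IsPrimePow q) (d : ℕ) (hd : 1 ≤ d) {n : ℕ}
    (Fq : Type*) [Field Fq] [Fintype Fq] [DecidableEq Fq] (hcq : Fintype.card Fq = q)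
    (a : Fin n → ℕ) (ha : IsSidonSeq d a)
    (L : ℕ) (haL : ∀ i, a i ≤ L) (hLq : d * L < q) :
    Module.finrank Fq (puncturedRM Fq n d (fun (β : Fq) (i : Fin n) => β ^ a i))
        = (n + d).choose n ∧
      ∀ c ∈ puncturedRM Fq n d (fun (β : Fq) (i : Fin n) => β ^ a i), c ≠ 0 →
        q - d * L ≤ hammingNorm c :=
  stmt_7_general q d Fq hcq a ha L haL hLq
end

section
/- There exist an absolute constant C > 0 and, for each positive integer d, a constant c_d > 0 such that the following holds: for every ε ∈ (0,1), every prime power q that is a perfect square (q = r^2), and all positive integers n, d with d ≤ ε(√q − 1)/2 − 1, there exists a finite multiset T_1 of points in F_q^n, of some size N, such that the punctured Reed–Muller code RM_q(n,d)|_{T_1} is an F_q-linear code of length N and dimension binom(n+d, n) whose relative minimum distance is at least 1 − ε, whose rate satisfies binom(n+d, n)/N ≥ c_d · ε/d!, and which is (1 − √ε, C/ε)-list decodable. -/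
/-- A code `C ⊆ Σ^ι` is `(ρ, L)`-list decodable if for every received word `y`, the set of
codewords within Hamming distance `ρ * |ι|` of `y` is finite of size at most `L`. -/
def ListDecodable {ι F : Type*} [Fintype ι] [DecidableEq F]
    (C : Set (ι → F)) (ρ : ℝ) (L : ℝ) : Prop :=
  ∀ y : ι → F,
    {c ∈ C | (hammingDist c y : ℝ) ≤ ρ * Fintype.card ι}.Finite ∧
    (({c ∈ C | (hammingDist c y : ℝ) ≤ ρ * Fintype.card ι}).ncard : ℝ) ≤ L

/-!
Put `m = ⌈ε⁻¹⌉`, `k = C(n+d, n)` (the dimension of the space of polynomials of degree `≤ d`),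
`N = 24km` and `t = 16k`. By Schwartz–Zippel a nonzero polynomial of degree `≤ d` vanishes at a
uniformly random point with probability at most `d/q`, so it vanishes at `t` or more of `N`
independent random points with probability at most `C(N,t) (d/q)^t`. A union bound over the `q^k`
polynomials gives a sequence of points at which every nonzero codeword has fewer than
`t ≤ (2/3)εN` zeros, provided `q^k C(N,t) d^t < q^t`; since `C(N,t) ≤ (eN/t)^t` this reduces to
`md ≤ √q`, which is what the hypothesis on `d` buys. Such a code has dimension `k`, relative
distance `> 1 - ε` and rate `1/(24m) ≥ ε/48`, and the Johnson bound turns pairwise agreement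
`≤ (2/3)εN` into lists of size `≤ 3/ε` at radius `1 - √ε`.
-/

open Finset MvPolynomial

/-- Stars and bars, with the slack `d - ∑ m` in coordinate `0`. -/
noncomputable def Finsupp.sumLeEquivSym (n d : ℕ) :
    {m : Fin n →₀ ℕ // (m.sum fun _ e => e) ≤ d} ≃ Sym (Fin (n + 1)) d :=
  Equiv.trans (β := {m : Fin (n + 1) →₀ ℕ // (m.sum fun _ e => e) = d})
    { toFun := fun m => ⟨Finsupp.cons (d - m.1.sum fun _ e => e) m.1, by
        rw [Finsupp.sum_cons]; have := m.2; omega⟩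
      invFun := fun m => ⟨Finsupp.tail m.1, by
        have h := m.2
        rw [← Finsupp.cons_tail m.1, Finsupp.sum_cons] at h
        omega⟩
      left_inv := fun m => Subtype.ext (Finsupp.tail_cons _ _)
      right_inv := fun m => by
        have h := m.2
        rw [← Finsupp.cons_tail m.1, Finsupp.sum_cons] at h
        refine Subtype.ext ?_
        conv_rhs => rw [← Finsupp.cons_tail m.1]
        change Finsupp.cons _ _ = _
        congr 1
        dsimp only
        omega }
    ((Sym.equivNatSum (Fin (n + 1)) d).trans (Equiv.subtypeEquivRight fun _ => Iff.rfl)).symm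

theorem MvPolynomial.finrank_restrictTotalDegree_s14 (F : Type*) [Field F] (n d : ℕ) :
    Module.finrank F (restrictTotalDegree (Fin n) F d) = (n + d).choose n := by
  rw [restrictTotalDegree, Module.finrank_eq_nat_card_basis (basisRestrictSupport F _),
    Set.coe_ofPred, Nat.card_congr (Finsupp.sumLeEquivSym n d), Nat.card_eq_fintype_card,
    Sym.card_sym_eq_choose, Fintype.card_fin, Nat.add_right_comm, Nat.add_sub_cancel,
    Nat.choose_symm_add]

theorem MvPolynomial.card_filter_eval_eq_zero_mul_le {F : Type*} [Field F] [Fintype F]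
    [DecidableEq F] {n : ℕ} {p : MvPolynomial (Fin n) F} (hp : p ≠ 0) :
    #{x | eval x p = 0} * Fintype.card F ≤ p.totalDegree * Fintype.card F ^ n := by
  have h := schwartz_zippel_totalDegree hp (univ : Finset F)
  have hq : (0 : ℚ≥0) < Fintype.card F := by exact_mod_cast Fintype.card_pos
  rw [Fintype.piFinset_univ, card_univ, div_le_div_iff₀ (by positivity) hq] at h
  exact_mod_cast h

theorem card_filter_le_card_filter_mem_le {ι X : Type*} [Fintype ι] [DecidableEq ι] [Fintype X]
    [DecidableEq X] (Z : Finset X) (t : ℕ) :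
    #{T : ι → X | t ≤ #{j | T j ∈ Z}} ≤
      (Fintype.card ι).choose t * (#Z ^ t * Fintype.card X ^ (Fintype.card ι - t)) := by
  have hsub : ({T : ι → X | t ≤ #{j | T j ∈ Z}} : Finset _) ⊆ (powersetCard t univ).biUnion
      fun S => Fintype.piFinset fun j => if j ∈ S then Z else univ := by
    intro T hT
    obtain ⟨S, hS, hSt⟩ := exists_subset_card_eq (mem_filter.mp hT).2
    refine mem_biUnion.mpr ⟨S, mem_powersetCard.mpr ⟨subset_univ S, hSt⟩, ?_⟩
    refine Fintype.mem_piFinset.mpr fun j => ?_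
    split_ifs with hj
    · exact (mem_filter.mp (hS hj)).2
    · exact mem_univ _
  refine (card_le_card hsub).trans (card_biUnion_le.trans (le_of_eq ?_))
  rw [← card_univ (α := ι), ← card_powersetCard, ← smul_eq_mul, ← sum_const]
  refine sum_congr rfl fun S hS => ?_
  rw [mem_powersetCard] at hS
  rw [Fintype.card_piFinset, card_univ]
  simp only [apply_ite card, card_univ]
  rw [prod_ite, prod_const, prod_const, filter_mem_eq_inter, univ_inter, filter_not,
    filter_mem_eq_inter, univ_inter, card_sdiff_of_subset hS.1, card_univ, hS.2]

def FewZeros {F ι : Type*} [Field F] [DecidableEq F] [Fintype ι] {n : ℕ} (T : ι → Fin n → F)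
    (d t : ℕ) : Prop :=
  ∀ p : MvPolynomial (Fin n) F, p.totalDegree ≤ d → p ≠ 0 → #{j | eval (T j) p = 0} < t

section RandomPoints

variable {F : Type*} [Field F] [Fintype F] [DecidableEq F] {ι : Type*} [Fintype ι] [DecidableEq ι]

theorem MvPolynomial.card_filter_le_card_filter_eval_eq_zero_mul_le {n t : ℕ}
    {p : MvPolynomial (Fin n) F} (hp : p ≠ 0) (ht : t ≤ Fintype.card ι) :
    #{T : ι → Fin n → F | t ≤ #{j | eval (T j) p = 0}} * Fintype.card F ^ t ≤
      (Fintype.card ι).choose t * p.totalDegree ^ t * (Fintype.card F ^ n) ^ Fintype.card ι := by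
  have hcount := card_filter_le_card_filter_mem_le (ι := ι) {x | eval x p = 0} t
  simp only [mem_filter, mem_univ, true_and, Fintype.card_fun, Fintype.card_fin] at hcount
  calc _ ≤ (Fintype.card ι).choose t * (#{x | eval x p = 0} ^ t *
          (Fintype.card F ^ n) ^ (Fintype.card ι - t)) * Fintype.card F ^ t :=
        Nat.mul_le_mul_right _ hcount
    _ = (Fintype.card ι).choose t * (#{x | eval x p = 0} * Fintype.card F) ^ t *
          (Fintype.card F ^ n) ^ (Fintype.card ι - t) := by ring
    _ ≤ (Fintype.card ι).choose t * (p.totalDegree * Fintype.card F ^ n) ^ t *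
          (Fintype.card F ^ n) ^ (Fintype.card ι - t) :=
        Nat.mul_le_mul_right _ <| Nat.mul_le_mul_left _ <|
          Nat.pow_le_pow_left (card_filter_eval_eq_zero_mul_le hp) t
    _ = _ := by
        rw [mul_pow, mul_assoc, mul_assoc, ← pow_add, Nat.add_sub_cancel' ht, ← mul_assoc]

theorem exists_fewZeros (n d t : ℕ) (ht : t ≤ Fintype.card ι)
    (h : Fintype.card F ^ (n + d).choose n * ((Fintype.card ι).choose t * d ^ t) <
      Fintype.card F ^ t) :
    ∃ T : ι → Fin n → F, FewZeros T d t := by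
  by_contra! hbad
  set P := restrictTotalDegree (Fin n) F d
  have : Finite P := Module.finite_of_finite F
  have : Fintype P := Fintype.ofFinite P
  set bad : P → Finset (ι → Fin n → F) := fun p =>
    {T | (p : MvPolynomial (Fin n) F) ≠ 0 ∧ t ≤ #{j | eval (T j) (p : MvPolynomial (Fin n) F) = 0}}
  have hcover : (univ : Finset (ι → Fin n → F)) ⊆ univ.biUnion bad := by
    intro T _
    obtain ⟨p, hpd, hp0, hpt⟩ : ∃ p : MvPolynomial (Fin n) F, p.totalDegree ≤ d ∧ p ≠ 0 ∧
        t ≤ #{j | eval (T j) p = 0} := by simpa [FewZeros] using hbad T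
    exact mem_biUnion.mpr ⟨⟨p, (mem_restrictTotalDegree _ _ _).mpr hpd⟩, mem_univ _,
      mem_filter.mpr ⟨mem_univ _, hp0, hpt⟩⟩
  have hbad_le : ∀ p : P, #(bad p) * Fintype.card F ^ t ≤
      (Fintype.card ι).choose t * d ^ t * (Fintype.card F ^ n) ^ Fintype.card ι := by
    rintro ⟨p, hpd⟩
    by_cases hp : p = 0
    · simp [bad, hp]
    simp only [bad, ne_eq, hp, not_false_eq_true, true_and]
    refine (card_filter_le_card_filter_eval_eq_zero_mul_le hp ht).trans ?_
    gcongr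
    exact (mem_restrictTotalDegree _ _ _).mp hpd
  have hle : (Fintype.card F ^ n) ^ Fintype.card ι * Fintype.card F ^ t ≤ Fintype.card P *
      ((Fintype.card ι).choose t * d ^ t * (Fintype.card F ^ n) ^ Fintype.card ι) :=
    calc _ ≤ (∑ p, #(bad p)) * Fintype.card F ^ t := by
          gcongr
          simpa using (card_le_card hcover).trans card_biUnion_le
      _ ≤ _ := by
          rw [sum_mul]
          exact (sum_le_sum fun p _ => hbad_le p).trans_eq (by simp)
  rw [Module.card_eq_pow_finrank (K := F) (V := P), finrank_restrictTotalDegree_s14, ← mul_assoc,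
    mul_comm] at hle
  have hQ : 0 < (Fintype.card F ^ n) ^ Fintype.card ι := by positivity
  exact (Nat.mul_lt_mul_of_pos_right h hQ).not_ge hle

end RandomPoints

section Johnson

variable {ι F : Type*} [Fintype ι] [DecidableEq F]

theorem card_filter_eq_add_hammingDist (c y : ι → F) :
    #{j | c j = y j} + hammingDist c y = Fintype.card ι := by
  rw [hammingDist, card_filter_add_card_filter_not, card_univ]

/-- The Johnson bound: count agreements with `y` twice and apply Cauchy–Schwarz over positions. -/
theorem card_mul_sq_sub_le (s : Finset (ι → F)) (y : ι → F) {a b : ℝ} (ha : 0 ≤ a) (hb : 0 ≤ b)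
    (hagree : ∀ c ∈ s, ∀ c' ∈ s, c ≠ c' → (#{j | c j = c' j} : ℝ) ≤ a)
    (hclose : ∀ c ∈ s, b ≤ #{j | c j = y j}) :
    #s * (b ^ 2 - a * Fintype.card ι) ≤ (Fintype.card ι : ℝ) ^ 2 := by
  set N : ℝ := (Fintype.card ι : ℝ)
  let χ : (ι → F) → ι → ℝ := fun c j => if c j = y j then 1 else 0
  have hrow : ∀ c ∈ s, b ≤ ∑ j, χ c j := fun c hc => by
    simpa [χ, sum_boole] using hclose c hc
  have hpair : ∀ c ∈ s, ∀ c' ∈ s, ∑ j, χ c j * χ c' j ≤ (if c = c' then N else 0) + a := by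
    intro c hc c' hc'
    have hle : ∑ j, χ c j * χ c' j ≤ #{j | c j = c' j} := by
      rw [← sum_boole]
      refine sum_le_sum fun j _ => ?_
      simp only [χ]
      split_ifs <;> simp_all
    split_ifs with h
    · have : (#{j | c j = c' j} : ℝ) ≤ N := by simp only [N]; exact_mod_cast card_le_univ _
      linarith
    · linarith [hagree c hc c' hc' h]
  have hlower : #s * b ≤ ∑ j, ∑ c ∈ s, χ c j := by
    rw [sum_comm, ← nsmul_eq_mul, ← sum_const]
    exact sum_le_sum hrow
  have hupper : ∑ j, (∑ c ∈ s, χ c j) ^ 2 ≤ #s * (N + #s * a) := by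
    calc ∑ j, (∑ c ∈ s, χ c j) ^ 2 = ∑ c ∈ s, ∑ c' ∈ s, ∑ j, χ c j * χ c' j := by
          simp only [sq, sum_mul_sum]
          rw [sum_comm]
          exact sum_congr rfl fun c _ => sum_comm
      _ ≤ ∑ c ∈ s, ∑ c' ∈ s, ((if c = c' then N else 0) + a) :=
          sum_le_sum fun c hc => sum_le_sum fun c' hc' => hpair c hc c' hc'
      _ = #s * (N + #s * a) := by
          simp only [sum_add_distrib, sum_ite_eq, sum_const, nsmul_eq_mul, sum_ite_mem, inter_self]
          ring
  have hCS := sq_sum_le_card_mul_sum_sq (s := univ) (f := fun j => ∑ c ∈ s, χ c j)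
  rw [card_univ] at hCS
  have hL : (0 : ℝ) ≤ #s := Nat.cast_nonneg _
  have key : (#s * b) ^ 2 ≤ N * (#s * (N + #s * a)) :=
    (pow_le_pow_left₀ (by positivity) hlower 2).trans
      (hCS.trans (mul_le_mul_of_nonneg_left hupper (Nat.cast_nonneg _)))
  rcases hL.eq_or_lt with hL0 | hL0
  · rw [← hL0, zero_mul]; positivity
  · nlinarith

theorem listDecodable_of_card_filter_eq_le [Finite F] [Nonempty ι] (C : Set (ι → F)) {ε θ : ℝ}
    (hε : 0 < ε) (hθ : 0 ≤ θ) (hθ1 : θ < 1)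
    (hagree : ∀ c ∈ C, ∀ c' ∈ C, c ≠ c' → (#{j | c j = c' j} : ℝ) ≤ θ * ε * Fintype.card ι) :
    ListDecodable C (1 - √ε) (1 / ((1 - θ) * ε)) := by
  intro y
  have hN : (0 : ℝ) < Fintype.card ι := by exact_mod_cast Fintype.card_pos
  have hfin : {c ∈ C | (hammingDist c y : ℝ) ≤ (1 - √ε) * Fintype.card ι}.Finite :=
    Set.toFinite _
  refine ⟨hfin, ?_⟩
  have hclose : ∀ c ∈ hfin.toFinset, √ε * Fintype.card ι ≤ #{j | c j = y j} := by
    intro c hc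
    have hsplit : (#{j | c j = y j} : ℝ) + hammingDist c y = Fintype.card ι := by
      exact_mod_cast card_filter_eq_add_hammingDist c y
    linarith [((Set.Finite.mem_toFinset hfin).mp hc).2]
  have key := card_mul_sq_sub_le hfin.toFinset y (by positivity) (by positivity)
    (fun c hc c' hc' => hagree c ((Set.Finite.mem_toFinset hfin).mp hc).1
      c' ((Set.Finite.mem_toFinset hfin).mp hc').1) hclose
  rw [mul_pow, Real.sq_sqrt hε.le] at key
  rw [Set.ncard_eq_toFinset_card _ hfin, le_div_iff₀ (by nlinarith)]
  refine le_of_mul_le_mul_right ?_ (pow_pos hN 2)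
  linarith

end Johnson

section PuncturedRM

variable {F : Type*} [Field F] {ι : Type*} {n d : ℕ} {T : ι → Fin n → F}

theorem mem_puncturedRM {w : ι → F} :
    w ∈ puncturedRM F n d T ↔
      ∃ p : MvPolynomial (Fin n) F, p.totalDegree ≤ d ∧ (fun j => eval (T j) p) = w := by
  simp only [puncturedRM, Submodule.mem_map, mem_restrictTotalDegree]
  rfl

variable [Fintype ι] [DecidableEq F] {t : ℕ}

theorem card_filter_eq_zero_lt_of_mem_puncturedRM
    (hT : FewZeros T d t)
    {w : ι → F} (hw : w ∈ puncturedRM F n d T)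
    (hw0 : w ≠ 0) : #{j | w j = 0} < t := by
  obtain ⟨p, hpd, rfl⟩ := mem_puncturedRM.mp hw
  exact hT p hpd fun hp => hw0 (funext fun _ => by simp [hp])

theorem card_filter_eq_lt_of_mem_puncturedRM
    (hT : FewZeros T d t)
    {c c' : ι → F} (hc : c ∈ puncturedRM F n d T) (hc' : c' ∈ puncturedRM F n d T)
    (hne : c ≠ c') : #{j | c j = c' j} < t := by
  simpa only [Pi.sub_apply, sub_eq_zero] using
    card_filter_eq_zero_lt_of_mem_puncturedRM hT (sub_mem hc hc') (sub_ne_zero.mpr hne)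

theorem finrank_puncturedRM
    (hT : FewZeros T d t)
    (ht : t ≤ Fintype.card ι) :
    Module.finrank F (puncturedRM F n d T) = (n + d).choose n := by
  set f : MvPolynomial (Fin n) F →ₗ[F] ι → F :=
    LinearMap.pi fun j => (MvPolynomial.aeval (T j)).toLinearMap
  have hinj : Function.Injective (f.domRestrict (restrictTotalDegree (Fin n) F d)) := by
    rw [← LinearMap.ker_eq_bot, LinearMap.ker_eq_bot']
    rintro ⟨p, hpd⟩ hp
    by_contra hp0
    have hzeros := hT p ((mem_restrictTotalDegree _ _ _).mp hpd) fun h => hp0 (Subtype.ext h)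
    have hall : ∀ j, eval (T j) p = 0 := fun j => by simpa [f] using congrFun hp j
    simp only [hall, filter_true, card_univ] at hzeros
    omega
  rw [puncturedRM, ← LinearMap.range_domRestrict, LinearMap.finrank_range_of_inj hinj,
    finrank_restrictTotalDegree_s14]

theorem card_lt_hammingNorm_add_of_mem_puncturedRM
    (hT : FewZeros T d t)
    {w : ι → F} (hw : w ∈ puncturedRM F n d T) (hw0 : w ≠ 0) :
    Fintype.card ι < hammingNorm w + t := by
  have hsplit := card_filter_eq_add_hammingDist w 0
  rw [hammingDist_zero_right] at hsplit
  have := card_filter_eq_zero_lt_of_mem_puncturedRM hT hw hw0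
  simp only [Pi.zero_apply] at hsplit
  omega

theorem listDecodable_puncturedRM [Finite F] [Nonempty ι]
    (hT : FewZeros T d t)
    {ε θ : ℝ} (hε : 0 < ε) (hθ : 0 ≤ θ) (hθ1 : θ < 1) (ht : (t : ℝ) ≤ θ * ε * Fintype.card ι) :
    ListDecodable (puncturedRM F n d T : Set (ι → F)) (1 - √ε) (1 / ((1 - θ) * ε)) :=
  listDecodable_of_card_filter_eq_le _ hε hθ hθ1 fun _ hc _ hc' hne =>
    (Nat.cast_lt.mpr (card_filter_eq_lt_of_mem_puncturedRM hT hc hc' hne)).le.trans ht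

end PuncturedRM

theorem Nat.choose_le_exp_mul_div_pow (N t : ℕ) :
    (N.choose t : ℝ) ≤ (Real.exp 1 * N / t) ^ t := by
  have ht : (t : ℝ) ^ t ≠ 0 := by exact_mod_cast Nat.pow_self_pos.ne'
  calc (N.choose t : ℝ) ≤ (N : ℝ) ^ t / t.factorial := Nat.choose_le_pow_div t N
    _ = (N / t : ℝ) ^ t * ((t : ℝ) ^ t / t.factorial) := by
        rw [div_pow]; field_simp
    _ ≤ (N / t : ℝ) ^ t * Real.exp t := by
        gcongr; exact Real.pow_div_factorial_le_exp _ (Nat.cast_nonneg t) t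
    _ = (Real.exp 1 * N / t) ^ t := by
        rw [← Real.exp_one_pow, mul_div_assoc, mul_pow, mul_comm]

theorem choose_mul_pow_lt_pow {k m d r : ℕ} (hk : 0 < k) (hr : 6 ≤ r) (hmd : m * d ≤ r) :
    (r ^ 2) ^ k * ((24 * k * m).choose (16 * k) * d ^ (16 * k)) < (r ^ 2) ^ (16 * k) := by
  have hchoose : ((24 * k * m).choose (16 * k) : ℝ) ≤ (9 / 2 * m) ^ (16 * k) := by
    refine (Nat.choose_le_exp_mul_div_pow _ _).trans (pow_le_pow_left₀ (by positivity) ?_ _)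
    have : (0 : ℝ) < k := by exact_mod_cast hk
    rw [div_le_iff₀ (by positivity)]
    push_cast
    nlinarith [Real.exp_one_lt_d9, mul_nonneg this.le (Nat.cast_nonneg (α := ℝ) m)]
  have hbase : (r : ℝ) ^ 2 * (9 / 2 * r) ^ 16 < ((r : ℝ) ^ 2) ^ 16 := by
    have h14 : (9 / 2 : ℝ) ^ 16 < (r : ℝ) ^ 14 :=
      (by norm_num : (9 / 2 : ℝ) ^ 16 < 6 ^ 14).trans_le
        (pow_le_pow_left₀ (by norm_num) (by exact_mod_cast hr) 14)
    calc (r : ℝ) ^ 2 * (9 / 2 * r) ^ 16 = (9 / 2) ^ 16 * (r : ℝ) ^ 18 := by ring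
      _ < (r : ℝ) ^ 14 * (r : ℝ) ^ 18 := by gcongr
      _ = ((r : ℝ) ^ 2) ^ 16 := by ring
  have hmdR : (m : ℝ) * d ≤ r := by exact_mod_cast hmd
  have : ((r : ℝ) ^ 2) ^ k * ((24 * k * m).choose (16 * k) * (d : ℝ) ^ (16 * k)) <
      ((r : ℝ) ^ 2) ^ (16 * k) :=
    calc _ ≤ ((r : ℝ) ^ 2) ^ k * ((9 / 2 * m) ^ (16 * k) * (d : ℝ) ^ (16 * k)) := by gcongr
      _ = ((r : ℝ) ^ 2) ^ k * (9 / 2 * (m * d)) ^ (16 * k) := by rw [← mul_pow, mul_assoc]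
      _ ≤ ((r : ℝ) ^ 2) ^ k * (9 / 2 * r) ^ (16 * k) := by gcongr
      _ = ((r : ℝ) ^ 2 * (9 / 2 * r) ^ 16) ^ k := by
          rw [mul_pow ((r : ℝ) ^ 2) _ k, ← pow_mul (9 / 2 * (r : ℝ)) 16 k, mul_comm 16 k]
      _ < (((r : ℝ) ^ 2) ^ 16) ^ k := pow_lt_pow_left₀ hbase (by positivity) hk.ne'
      _ = ((r : ℝ) ^ 2) ^ (16 * k) := by rw [pow_mul]
  exact_mod_cast this

theorem one_le_mul_ceil_inv {ε : ℝ} (hε : 0 < ε) : 1 ≤ ε * ⌈ε⁻¹⌉₊ := by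
  simpa [mul_inv_cancel₀ hε.ne'] using mul_le_mul_of_nonneg_left (Nat.le_ceil ε⁻¹) hε.le

theorem mul_ceil_inv_lt_one_add {ε : ℝ} (hε : 0 < ε) : ε * ⌈ε⁻¹⌉₊ < 1 + ε := by
  simpa [mul_add, mul_inv_cancel₀ hε.ne'] using
    mul_lt_mul_of_pos_left (Nat.ceil_lt_add_one (inv_nonneg.mpr hε.le)) hε

theorem choose_ceil_inv_mul_pow_lt_pow {ε : ℝ} (hε : 0 < ε) (hε1 : ε < 1) {k d r : ℕ}
    (hk : 0 < k) (hd : 0 < d) (hdr : (d : ℝ) ≤ ε * (r - 1) / 2 - 1) :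
    (r ^ 2) ^ k * ((24 * k * ⌈ε⁻¹⌉₊).choose (16 * k) * d ^ (16 * k)) < (r ^ 2) ^ (16 * k) := by
  have hd1 : (1 : ℝ) ≤ d := Nat.one_le_cast.mpr hd
  have hr : 6 ≤ r := by
    have : (5 : ℝ) < r := by nlinarith
    exact_mod_cast this
  have hmd : ε * (⌈ε⁻¹⌉₊ * d) < ε * r := by nlinarith [mul_ceil_inv_lt_one_add hε]
  exact choose_mul_pow_lt_pow hk hr (by exact_mod_cast (lt_of_mul_lt_mul_left hmd hε.le).le)

theorem stmt_14 : ∃ C : ℝ, 0 < C ∧ ∃ c : ℕ → ℝ, (∀ d : ℕ, 0 < d → 0 < c d) ∧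
    ∀ (ε : ℝ), 0 < ε → ε < 1 →
      ∀ (r q n d : ℕ), IsPrimePow r → q = r ^ 2 → 0 < n → 0 < d →
        (d : ℝ) ≤ ε * (Real.sqrt q - 1) / 2 - 1 →
        ∀ (Fq : Type) [Field Fq] [Fintype Fq] [DecidableEq Fq], Fintype.card Fq = q →
          ∃ (N : ℕ) (_ : 0 < N) (T1 : Fin N → Fin n → Fq),
            Module.finrank Fq (puncturedRM Fq n d T1) = (n + d).choose n ∧
            (∀ w ∈ puncturedRM Fq n d T1, w ≠ 0 → (1 - ε) * N ≤ hammingNorm w) ∧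
            c d * ε / (d.factorial : ℝ) ≤ ((n + d).choose n : ℝ) / N ∧
            ListDecodable (puncturedRM Fq n d T1 : Set (Fin N → Fq))
              (1 - Real.sqrt ε) (C / ε) := by
  refine ⟨3, by norm_num, fun _ => 1 / 48, fun _ _ => by norm_num, ?_⟩
  intro ε hε hε1 r q n d _ hqr _ hd hdeg Fq _ _ _ hcard
  rw [hqr, Nat.cast_pow, Real.sqrt_sq (Nat.cast_nonneg r)] at hdeg
  set m := ⌈ε⁻¹⌉₊
  set k := (n + d).choose n
  have hk : 0 < k := Nat.choose_pos (Nat.le_add_right n d)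
  have hm : 0 < m := Nat.ceil_pos.mpr (inv_pos.mpr hε)
  have hεm := one_le_mul_ceil_inv hε
  have hεm' := mul_ceil_inv_lt_one_add hε
  have htN : 16 * k ≤ Fintype.card (Fin (24 * k * m)) := by rw [Fintype.card_fin]; nlinarith
  obtain ⟨T, hT⟩ := exists_fewZeros (F := Fq) n d (16 * k) htN
    (by rw [hcard, hqr, Fintype.card_fin]; exact choose_ceil_inv_mul_pow_lt_pow hε hε1 hk hd hdeg)
  have ht : (16 * k : ℝ) ≤ 2 / 3 * ε * (24 * k * m) := by nlinarith
  refine ⟨24 * k * m, by positivity, T, finrank_puncturedRM hT htN, fun w hw hw0 => ?_, ?_, ?_⟩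
  · have := (Nat.cast_lt (α := ℝ)).mpr (card_lt_hammingNorm_add_of_mem_puncturedRM hT hw hw0)
    push_cast [Fintype.card_fin] at this ⊢
    nlinarith
  · have hfact : (1 : ℝ) ≤ d.factorial := Nat.one_le_cast.mpr d.factorial_pos
    rw [div_le_div_iff₀ (by positivity) (by positivity)]
    push_cast
    nlinarith
  · have : NeZero (24 * k * m) := ⟨by positivity⟩
    have := listDecodable_puncturedRM hT hε (θ := 2 / 3) (by norm_num) (by norm_num)
      (by rw [Fintype.card_fin]; exact_mod_cast ht)
    rwa [show (1 : ℝ) / ((1 - 2 / 3) * ε) = 3 / ε by ring] at this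
end
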